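/- Let d_u, d_v, d_alpha, d_beta, d_gamma be strictly positive real constants, and let alpha >= 0, gamma >= 0, beta > 0 be real exponents. Define the map A from the closed first quadrant {(u,v) in R^2 : u >= 0, v >= 0} to itself by A(u,v) = ((d_u + d_alpha * u^alpha + d_beta * v^beta) * u, (d_v + d_gamma * v^gamma) * v). Then A is a homeomorphism of the quadrant onto itself: A is a continuous bijection of {(u,v) : u >= 0, v >= 0} onto itself whose inverse is also continuous. -/

import Mathlib

/-!
`A` is triangular: its second component is `v ↦ (d_v + d_γ v^γ) v`, and for fixed `v` its first
component is `u ↦ (d_u + d_β v^β + d_α u^α) u`. Every map `t ↦ (d + e t^c) t` with `d > 0`,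
`e, c ≥ 0` is a continuous strictly increasing bijection of `[0, ∞)`, so `A` is a continuous
bijection of the quadrant. Moreover `‖A p‖ ≥ min d_u d_v ‖p‖`, so `A` is proper, hence closed,
hence a homeomorphism.
-/

open Real Set Filter

section ScalarMap

variable {d e c : ℝ}

lemma continuous_add_mul_rpow_mul (hc : 0 ≤ c) :
    Continuous fun t : ℝ => (d + e * t ^ c) * t := by
  fun_prop (disch := exact hc)

lemma mul_le_add_mul_rpow_mul (he : 0 ≤ e) {t : ℝ} (ht : 0 ≤ t) :
    d * t ≤ (d + e * t ^ c) * t := by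
  have : 0 ≤ e * t ^ c * t := by positivity
  linarith

lemma strictMonoOn_add_mul_rpow_mul (hd : 0 < d) (he : 0 ≤ e) (hc : 0 ≤ c) :
    StrictMonoOn (fun t : ℝ => (d + e * t ^ c) * t) (Ici 0) := by
  intro a (ha : 0 ≤ a) b (hb : 0 ≤ b) hab
  have hpow : e * a ^ c ≤ e * b ^ c := by gcongr
  exact mul_lt_mul' (by linarith) hab ha (by positivity)

lemma bijOn_add_mul_rpow_mul (hd : 0 < d) (he : 0 ≤ e) (hc : 0 ≤ c) :
    BijOn (fun t : ℝ => (d + e * t ^ c) * t) (Ici 0) (Ici 0) := by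
  have htop : Tendsto (fun t : ℝ => (d + e * t ^ c) * t) atTop atTop :=
    tendsto_atTop_mono' _ ((eventually_ge_atTop 0).mono fun t ht => mul_le_add_mul_rpow_mul he ht)
      (tendsto_id.const_mul_atTop hd)
  refine ⟨fun t (ht : 0 ≤ t) => ?_, (strictMonoOn_add_mul_rpow_mul hd he hc).injOn, ?_⟩
  · exact (mul_nonneg hd.le ht).trans (mul_le_add_mul_rpow_mul he ht)
  · simpa [SurjOn] using
      intermediate_value_Ici (a := 0) (continuous_add_mul_rpow_mul hc).continuousOn htop

end ScalarMap

lemma Set.BijOn.prod_triangular {α β γ δ : Type*} {f : α → β → γ} {g : β → δ}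
    {s₁ : Set α} {s₂ : Set β} {t₁ : Set γ} {t₂ : Set δ}
    (hf : ∀ v ∈ s₂, BijOn (f · v) s₁ t₁) (hg : BijOn g s₂ t₂) :
    BijOn (fun p : α × β => (f p.1 p.2, g p.2)) (s₁ ×ˢ s₂) (t₁ ×ˢ t₂) := by
  refine ⟨fun p ⟨hu, hv⟩ => ⟨(hf _ hv).mapsTo hu, hg.mapsTo hv⟩, ?_, ?_⟩
  · rintro ⟨u₁, v₁⟩ ⟨hu₁, hv₁⟩ ⟨u₂, v₂⟩ ⟨hu₂, hv₂⟩ h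
    obtain ⟨hfu, hgv⟩ := Prod.ext_iff.1 h
    obtain rfl : v₁ = v₂ := hg.injOn hv₁ hv₂ hgv
    rw [show u₁ = u₂ from (hf v₁ hv₁).injOn hu₁ hu₂ hfu]
  · rintro ⟨w, z⟩ ⟨hw, hz⟩
    obtain ⟨v, hv, rfl⟩ := hg.surjOn hz
    obtain ⟨u, hu, rfl⟩ := (hf v hv).surjOn hw
    exact ⟨(u, v), ⟨hu, hv⟩, rfl⟩

lemma isProperMap_of_mul_dist_le {X Y : Type*} [PseudoMetricSpace X] [ProperSpace X]
    [MetricSpace Y] {f : X → Y} (hf : Continuous f) {c : ℝ} (hc : 0 < c) (x₀ : X) (y₀ : Y)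
    (h : ∀ x, c * dist x x₀ ≤ dist (f x) y₀) : IsProperMap f := by
  refine isProperMap_iff_tendsto_cocompact.2
    ⟨hf, tendsto_cocompact_of_tendsto_dist_comp_atTop y₀ ?_⟩
  exact tendsto_atTop_mono h ((tendsto_dist_right_cocompact_atTop x₀).const_mul_atTop hc)

lemma Prod.mul_norm_le_norm {E F : Type*} [SeminormedAddCommGroup E] [SeminormedAddCommGroup F]
    {c : ℝ} {p q : E × F} (h₁ : c * ‖p.1‖ ≤ ‖q.1‖) (h₂ : c * ‖p.2‖ ≤ ‖q.2‖) : c * ‖p‖ ≤ ‖q‖ := by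
  rcases max_choice ‖p.1‖ ‖p.2‖ with h | h <;> rw [Prod.norm_def, h]
  · exact h₁.trans (norm_fst_le q)
  · exact h₂.trans (norm_snd_le q)

noncomputable def crossDiffusionMap (du dv dα dβ dγ α β γ : ℝ) (p : ℝ × ℝ) : ℝ × ℝ :=
  ((du + dα * p.1 ^ α + dβ * p.2 ^ β) * p.1, (dv + dγ * p.2 ^ γ) * p.2)

section CrossDiffusionMap

variable {du dv dα dβ dγ α β γ : ℝ}

lemma continuous_crossDiffusionMap (hα : 0 ≤ α) (hβ : 0 ≤ β) (hγ : 0 ≤ γ) :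
    Continuous (crossDiffusionMap du dv dα dβ dγ α β γ) := by
  unfold crossDiffusionMap
  fun_prop (disch := assumption)

lemma bijOn_crossDiffusionMap (hdu : 0 < du) (hdv : 0 < dv) (hdα : 0 ≤ dα) (hdβ : 0 ≤ dβ)
    (hdγ : 0 ≤ dγ) (hα : 0 ≤ α) (hγ : 0 ≤ γ) :
    BijOn (crossDiffusionMap du dv dα dβ dγ α β γ) (Ici 0 ×ˢ Ici 0) (Ici 0 ×ˢ Ici 0) := by
  refine BijOn.prod_triangular (f := fun u v => (du + dα * u ^ α + dβ * v ^ β) * u)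
    (fun v (hv : 0 ≤ v) => ?_) (bijOn_add_mul_rpow_mul hdv hdγ hγ)
  exact (bijOn_add_mul_rpow_mul (d := du + dβ * v ^ β) (by positivity) hdα hα).congr
    fun u _ => by ring

lemma min_mul_norm_le_norm_crossDiffusionMap (hdα : 0 ≤ dα) (hdβ : 0 ≤ dβ) (hdγ : 0 ≤ dγ)
    {p : ℝ × ℝ} (hp : p ∈ Ici 0 ×ˢ Ici 0) :
    min du dv * ‖p‖ ≤ ‖crossDiffusionMap du dv dα dβ dγ α β γ p‖ := by
  obtain ⟨hu, hv⟩ : 0 ≤ p.1 ∧ 0 ≤ p.2 := hp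
  have hcoeff₁ : min du dv ≤ du + dα * p.1 ^ α + dβ * p.2 ^ β := by
    have : 0 ≤ dα * p.1 ^ α + dβ * p.2 ^ β := by positivity
    linarith [min_le_left du dv]
  have hcoeff₂ : min du dv ≤ dv + dγ * p.2 ^ γ := by
    have : 0 ≤ dγ * p.2 ^ γ := by positivity
    linarith [min_le_right du dv]
  refine Prod.mul_norm_le_norm ?_ ?_ <;> rw [crossDiffusionMap, norm_mul]
  · exact mul_le_mul_of_nonneg_right (hcoeff₁.trans (Real.le_norm_self _)) (norm_nonneg _)
  · exact mul_le_mul_of_nonneg_right (hcoeff₂.trans (Real.le_norm_self _)) (norm_nonneg _)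

end CrossDiffusionMap

/-- The map `A(u,v) = ((d_u + d_α u^α + d_β v^β) u, (d_v + d_γ v^γ) v)` is a
homeomorphism of the closed first quadrant onto itself. -/
theorem stmt_0 (du dv dα dβ dγ α β γ : ℝ)
    (hdu : 0 < du) (hdv : 0 < dv) (hdα : 0 < dα) (hdβ : 0 < dβ) (hdγ : 0 < dγ)
    (hα : 0 ≤ α) (hγ : 0 ≤ γ) (hβ : 0 < β) :
    ∃ h : {p : ℝ × ℝ // 0 ≤ p.1 ∧ 0 ≤ p.2} ≃ₜ {p : ℝ × ℝ // 0 ≤ p.1 ∧ 0 ≤ p.2},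
      ∀ p : {p : ℝ × ℝ // 0 ≤ p.1 ∧ 0 ≤ p.2},
        ((h p : ℝ × ℝ)) =
          ((du + dα * (p : ℝ × ℝ).1 ^ α + dβ * (p : ℝ × ℝ).2 ^ β) * (p : ℝ × ℝ).1,
           (dv + dγ * (p : ℝ × ℝ).2 ^ γ) * (p : ℝ × ℝ).2) := by
  have : ProperSpace ↥(Ici (0 : ℝ) ×ˢ Ici (0 : ℝ)) := .of_isClosed (isClosed_Ici.prod isClosed_Ici)
  have hbij := bijOn_crossDiffusionMap (β := β) hdu hdv hdα.le hdβ.le hdγ.le hα hγ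
  set A := hbij.mapsTo.restrict
  have hcont : Continuous A :=
    (continuous_crossDiffusionMap hα hβ.le hγ).continuousOn.mapsToRestrict hbij.mapsTo
  have hproper : IsProperMap A := by
    refine isProperMap_of_mul_dist_le hcont (lt_min hdu hdv) ⟨0, self_mem_Ici, self_mem_Ici⟩
      ⟨0, self_mem_Ici, self_mem_Ici⟩ fun p => ?_
    rw [Subtype.dist_eq, Subtype.dist_eq, dist_zero_right, dist_zero_right]
    exact min_mul_norm_le_norm_crossDiffusionMap hdα.le hdβ.le hdγ.le p.2
  exact ⟨(hbij.equiv _).toHomeomorphOfContinuousClosed hcont hproper.isClosedMap, fun _ => rfl⟩
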